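/- Let n ≥ 4 and set u_max(n) = 2^{⌊log₂(n−2)⌋+2} − n. Then (i) every factor w of the Thue–Morse word t of length n uniquely determines at most u_max(n) letters: for all natural numbers ℓ₁, ℓ₂ with ℓ₁ + ℓ₂ > u_max(n) there exist two distinct pairs (v₁, v₂) ≠ (y₁, y₂) of binary words with |v₁| = |y₁| = ℓ₁ and |v₂| = |y₂| = ℓ₂ such that both v₁ w v₂ and y₁ w y₂ are factors of t; and (ii) the bound is sharp: there exist a factor w of t of length n and natural numbers ℓ₁, ℓ₂ with ℓ₁ + ℓ₂ = u_max(n) such that exactly one pair of binary words (v₁, v₂) with |v₁| = ℓ₁ and |v₂| = ℓ₂ makes v₁ w v₂ a factor of t. -/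

import Mathlib

/-- The Thue–Morse sequence: sum of binary digits of `n`, mod 2. -/
def tm (n : ℕ) : Fin 2 := Fin.ofNat 2 (Nat.digits 2 n).sum

/-- The factor of the Thue–Morse word of length `n` starting at position `i`. -/
def tmWord (i n : ℕ) : List (Fin 2) := (List.range n).map (fun j => tm (i + j))

/-- A binary word is a factor of the Thue–Morse word. -/
def IsFactor (w : List (Fin 2)) : Prop := ∃ i : ℕ, w = tmWord i w.length

/-- Number of occurrences of the word `x` as a factor of `u`. -/
def occCount (u x : List (Fin 2)) : ℕ :=
  ((List.range u.length).filter (fun i => (u.drop i).take x.length = x)).length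

/-- Two binary words (of equal length) are 2-abelian equivalent: same first letter,
same last letter, and the same number of occurrences of every word of length 2. -/
def TwoAbelianEquiv (u v : List (Fin 2)) : Prop :=
  u.length = v.length ∧ u.take 1 = v.take 1 ∧
  u.drop (u.length - 1) = v.drop (v.length - 1) ∧
  ∀ x : List (Fin 2), x.length = 2 → occCount u x = occCount v x

/-- `P n` is the 2-abelian complexity of the Thue–Morse word: the number of
2-abelian equivalence classes of factors of length `n`. -/
noncomputable def P (n : ℕ) : ℕ :=
  Nat.card (Quot (fun u v : {w : List (Fin 2) // w.length = n ∧ IsFactor w} =>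
    TwoAbelianEquiv u.1 v.1))

/-- `pword w` counts the pairs in `w`: the total number of occurrences of `00` and `11`. -/
def pword (w : List (Fin 2)) : ℕ := occCount w [0, 0] + occCount w [1, 1]

/-- The set of possible pair counts of Thue–Morse factors of length `n`. -/
def pairs (n : ℕ) : Set ℕ :=
  { m | ∃ w : List (Fin 2), w.length = n ∧ IsFactor w ∧ pword w = m }

/-- The set of possible pair counts of Thue–Morse factors of length `n`
occurring at some odd position (pure odd factors). -/
def PAIRS (n : ℕ) : Set ℕ := { m | ∃ i : ℕ, i % 2 = 1 ∧ pword (tmWord i n) = m }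

/-!
Write `t` for the Thue–Morse word; it is the fixed point of `μ : 0 ↦ 01, 1 ↦ 10`, so
`t (2m) = t m` and `t (2m+1) = t m + 1`. For `k = ⌊log₂ (n - 2)⌋` we have
`2^k + 2 ≤ n ≤ 2^(k+1) + 1` and `u_max(n) + n = 2^(k+2)`.

(i) An occurrence of `w` at position `i` is cut out of the `μ`-image of the factor of length about
`n/2` at `⌊i/2⌋`. Two occurrences of that factor whose windows of length `⌈L/2⌉` differ map to two
occurrences of `w` whose windows of length `L` differ. After `k` halvings we are left with factors
of length at most `3` in windows of length `5`, a finite check; larger windows follow because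
every factor recurs arbitrarily far to the right.

(ii) Two equal adjacent letters of `t` only occur at odd positions. The factor of length `n` at
`2^(k+1) - 1` contains such a pair, so all its occurrences have the same parity and it halves to
the corresponding factor for `k - 1`. By induction on `k`, it only occurs as the central factor of
a copy of the prefix of length `2^(k+2)`, which is therefore its unique extension.
-/
@[simp]
lemma tm_two_mul (m : ℕ) : tm (2 * m) = tm m := by
  rcases Nat.eq_zero_or_pos m with rfl | hm
  · rfl
  · simpa [tm] using congrArg (fun l => Fin.ofNat 2 l.sum)
      (Nat.digits_add 2 one_lt_two 0 m two_pos (Or.inr hm.ne'))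

@[simp]
lemma tm_two_mul_add_one (m : ℕ) : tm (2 * m + 1) = tm m + 1 := by
  have h := Nat.digits_add 2 one_lt_two 1 m one_lt_two (Or.inl one_ne_zero)
  rw [add_comm] at h
  simp only [tm, h, List.sum_cons]
  ext
  simp [Fin.val_add]
  omega

lemma tm_two_pow_mul_add {k r : ℕ} (m : ℕ) (hr : r < 2 ^ k) :
    tm (2 ^ k * m + r) = tm m + tm r := by
  induction k generalizing r with
  | zero =>
    obtain rfl : r = 0 := by simpa using hr
    simp [tm]
  | succ k ih =>
    obtain ⟨r, rfl | rfl⟩ : ∃ r', r = 2 * r' ∨ r = 2 * r' + 1 := ⟨r / 2, by omega⟩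
    · rw [show 2 ^ (k + 1) * m + 2 * r = 2 * (2 ^ k * m + r) by ring, tm_two_mul, tm_two_mul,
        ih (by rw [pow_succ] at hr; omega)]
    · rw [show 2 ^ (k + 1) * m + (2 * r + 1) = 2 * (2 ^ k * m + r) + 1 by ring,
        tm_two_mul_add_one, tm_two_mul_add_one, ih (by rw [pow_succ] at hr; omega), add_assoc]

lemma mod_two_eq_one_of_tm_eq_tm_succ {j : ℕ} (h : tm j = tm (j + 1)) : j % 2 = 1 := by
  by_contra hj
  obtain ⟨m, rfl⟩ : ∃ m, j = 2 * m := ⟨j / 2, by omega⟩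
  simp at h

@[simp]
lemma tmWord_length (i n : ℕ) : (tmWord i n).length = n := by simp [tmWord]

lemma isFactor_tmWord (i n : ℕ) : IsFactor (tmWord i n) := ⟨i, by rw [tmWord_length]⟩

lemma tmWord_eq_tmWord_iff {x y n : ℕ} :
    tmWord x n = tmWord y n ↔ ∀ s < n, tm (x + s) = tm (y + s) := by
  simp [tmWord, List.ext_getElem_iff]

lemma tmWord_add (p m k : ℕ) : tmWord p (m + k) = tmWord p m ++ tmWord (p + m) k := by
  simp [tmWord, List.range_add, add_assoc]

lemma tmWord_add_add (p l₁ n l₂ : ℕ) :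
    tmWord p (l₁ + n + l₂) = tmWord p l₁ ++ tmWord (p + l₁) n ++ tmWord (p + l₁ + n) l₂ := by
  rw [tmWord_add, tmWord_add, add_assoc p]

lemma tmWord_add_eq_of_eq {x y n : ℕ} (h : tmWord x n = tmWord y n) {a m : ℕ} (ham : a + m ≤ n) :
    tmWord (x + a) m = tmWord (y + a) m := by
  rw [tmWord_eq_tmWord_iff] at h ⊢
  intro s hs
  simpa only [add_assoc] using h (a + s) (by omega)

lemma tmWord_eq_of_eq_of_le {x y n : ℕ} (h : tmWord x n = tmWord y n) {m : ℕ} (hm : m ≤ n) :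
    tmWord x m = tmWord y m := by
  simpa using tmWord_add_eq_of_eq h (a := 0) (by omega)

lemma tmWord_two_mul_eq {x y n : ℕ} (h : tmWord x n = tmWord y n) :
    tmWord (2 * x) (2 * n) = tmWord (2 * y) (2 * n) := by
  rw [tmWord_eq_tmWord_iff] at h ⊢
  intro s hs
  obtain ⟨u, rfl | rfl⟩ : ∃ u, s = 2 * u ∨ s = 2 * u + 1 := ⟨s / 2, by omega⟩
  · simpa [← mul_add] using h u (by omega)
  · simpa [← add_assoc, ← mul_add] using h u (by omega)

lemma tmWord_div_two_eq {x y n : ℕ} (h : tmWord x n = tmWord y n) (hxy : x % 2 = y % 2)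
    (hn : 0 < n) : tmWord (x / 2) ((n + 1 + x % 2) / 2) = tmWord (y / 2) ((n + 1 + x % 2) / 2) := by
  rw [tmWord_eq_tmWord_iff] at h ⊢
  intro u hu
  rcases Nat.mod_two_eq_zero_or_one x with hx | hx
  · have := h (2 * u) (by omega)
    rwa [show x + 2 * u = 2 * (x / 2 + u) by omega, show y + 2 * u = 2 * (y / 2 + u) by omega,
      tm_two_mul, tm_two_mul] at this
  · rcases u with _ | u
    · have := h 0 hn
      rw [show x + 0 = 2 * (x / 2) + 1 by omega, show y + 0 = 2 * (y / 2) + 1 by omega,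
        tm_two_mul_add_one, tm_two_mul_add_one] at this
      simpa using this
    · have := h (2 * u + 1) (by omega)
      rwa [show x + (2 * u + 1) = 2 * (x / 2 + (u + 1)) by omega,
        show y + (2 * u + 1) = 2 * (y / 2 + (u + 1)) by omega, tm_two_mul, tm_two_mul] at this

lemma mod_two_eq_of_tmWord_eq {x y n s : ℕ} (h : tmWord x n = tmWord y n) (hs : s + 1 < n)
    (hy : tm (y + s) = tm (y + s + 1)) : x % 2 = y % 2 := by
  rw [tmWord_eq_tmWord_iff] at h
  have hx : tm (x + s) = tm (x + s + 1) := by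
    rw [h s (by omega), add_assoc, h (s + 1) hs, ← add_assoc, hy]
  have := mod_two_eq_one_of_tm_eq_tm_succ hx
  have := mod_two_eq_one_of_tm_eq_tm_succ hy
  omega

lemma exists_le_and_tmWord_eq (i n N : ℕ) : ∃ j, N ≤ j ∧ tmWord j n = tmWord i n := by
  set k := i + n + N
  have hk : k < 2 ^ k := Nat.lt_two_pow_self
  refine ⟨2 ^ k * 3 + i, by omega, tmWord_eq_tmWord_iff.2 fun s hs => ?_⟩
  rw [add_assoc, tm_two_pow_mul_add 3 (by omega), show tm 3 = 0 by decide, zero_add]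

lemma exists_lt_eight_tmWord_three_eq (i : ℕ) : ∃ j < 8, tmWord j 3 = tmWord i 3 := by
  have hne : ¬(tm i = tm (i + 1) ∧ tm (i + 1) = tm (i + 2)) := fun ⟨h₁, h₂⟩ => by
    have := mod_two_eq_one_of_tm_eq_tm_succ h₁
    have := mod_two_eq_one_of_tm_eq_tm_succ h₂
    omega
  have key : ∀ a b c : Fin 2, ¬(a = b ∧ b = c) →
      ∃ j < 8, tm j = a ∧ tm (j + 1) = b ∧ tm (j + 2) = c := by decide
  obtain ⟨j, hj, h₀, h₁, h₂⟩ := key _ _ _ hne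
  refine ⟨j, hj, tmWord_eq_tmWord_iff.2 fun s hs => ?_⟩
  interval_cases s <;> assumption

/-- In the notation of the theorem: `w = tmWord i n`, `o = |v₁|`, `L = |v₁ w v₂|`, and the windows
at `p` and `q` are `v₁ w v₂ ≠ y₁ w y₂`. -/
def HasTwoExtensions (i n o L : ℕ) : Prop :=
  ∃ p q, tmWord (p + o) n = tmWord i n ∧ tmWord (q + o) n = tmWord i n ∧ tmWord p L ≠ tmWord q L

namespace HasTwoExtensions

variable {i n o L : ℕ}

lemma of_tmWord_eq {j : ℕ} (h : HasTwoExtensions j n o L) (hij : tmWord j n = tmWord i n) :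
    HasTwoExtensions i n o L := by
  obtain ⟨p, q, hp, hq, hpq⟩ := h
  exact ⟨p, q, hp.trans hij, hq.trans hij, hpq⟩

lemma widen (h : HasTwoExtensions i n o L) (hoL : o + n ≤ L) {o' L' : ℕ} (ho : o ≤ o')
    (hL : L + o' ≤ L' + o) : HasTwoExtensions i n o' L' := by
  obtain ⟨p, q, hp, hq, hpq⟩ := h
  obtain ⟨P, hP, hPp⟩ := exists_le_and_tmWord_eq p L o'
  obtain ⟨Q, hQ, hQq⟩ := exists_le_and_tmWord_eq q L o'
  refine ⟨P + o - o', Q + o - o', ?_, ?_, fun hPQ => hpq ?_⟩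
  · rw [show P + o - o' + o' = P + o by omega, tmWord_add_eq_of_eq hPp hoL, hp]
  · rw [show Q + o - o' + o' = Q + o by omega, tmWord_add_eq_of_eq hQq hoL, hq]
  · have := tmWord_add_eq_of_eq hPQ (a := o' - o) (m := L) (by omega)
    rwa [show P + o - o' + (o' - o) = P by omega, show Q + o - o' + (o' - o) = Q by omega,
      hPp, hQq] at this

lemma of_half
    (h : HasTwoExtensions (i / 2) ((n + 1 + i % 2) / 2) ((o + 1 - i % 2) / 2) ((L + 1) / 2)) :
    HasTwoExtensions i n o L := by
  obtain ⟨p, q, hp, hq, hpq⟩ := h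
  set n₂ := (n + 1 + i % 2) / 2
  set o₂ := (o + 1 - i % 2) / 2
  have lift : ∀ r, tmWord (r + o₂) n₂ = tmWord (i / 2) n₂ →
      tmWord (2 * r + (2 * o₂ + i % 2 - o) + o) n = tmWord i n := by
    intro r hr
    have := tmWord_add_eq_of_eq (tmWord_two_mul_eq hr) (a := i % 2) (m := n) (by omega)
    rwa [show 2 * (r + o₂) + i % 2 = 2 * r + (2 * o₂ + i % 2 - o) + o by omega,
      show 2 * (i / 2) + i % 2 = i by omega] at this
  refine ⟨_, _, lift p hp, lift q hq, fun hpq₂ => hpq ?_⟩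
  have hL : 0 < L := Nat.pos_of_ne_zero fun hL => hpq (by simp [hL, tmWord])
  have := tmWord_div_two_eq hpq₂ (by omega) hL
  rw [show (2 * p + (2 * o₂ + i % 2 - o)) / 2 = p by omega,
    show (2 * q + (2 * o₂ + i % 2 - o)) / 2 = q by omega] at this
  exact tmWord_eq_of_eq_of_le this (by omega)

end HasTwoExtensions

set_option synthInstance.maxSize 1000 in
lemma hasTwoExtensions_five {i n o : ℕ} (hn : n ≤ 3) (ho : o + n ≤ 5) :
    HasTwoExtensions i n o 5 := by
  have key : ∀ j < 8, ∀ n < 4, ∀ o < 6 - n, ∃ p < 12, ∃ q < 12,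
      tmWord (p + o) n = tmWord j n ∧ tmWord (q + o) n = tmWord j n ∧
        tmWord p 5 ≠ tmWord q 5 := by
    decide
  obtain ⟨j, hj, hji⟩ := exists_lt_eight_tmWord_three_eq i
  obtain ⟨p, -, q, -, hpq⟩ := key j hj n (by omega) o (by omega)
  exact HasTwoExtensions.of_tmWord_eq ⟨p, q, hpq⟩ (tmWord_eq_of_eq_of_le hji hn)

lemma hasTwoExtensions_two_pow (k : ℕ) {i n o : ℕ} (hn : n ≤ 2 ^ (k + 1) + 1)
    (ho : o + n ≤ 2 ^ (k + 2) + 1) : HasTwoExtensions i n o (2 ^ (k + 2) + 1) := by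
  induction k generalizing i n o with
  | zero => exact hasTwoExtensions_five hn ho
  | succ k ih =>
    apply HasTwoExtensions.of_half
    have h₁ : 2 ^ (k + 1 + 1) = 2 * 2 ^ (k + 1) := pow_succ' 2 (k + 1)
    have h₂ : 2 ^ (k + 1 + 2) = 2 * 2 ^ (k + 2) := pow_succ' 2 (k + 2)
    rw [show (2 ^ (k + 1 + 2) + 1 + 1) / 2 = 2 ^ (k + 2) + 1 by omega]
    exact ih (by omega) (by omega)

lemma hasTwoExtensions_of_two_pow_lt {k i n o L : ℕ} (hn : n ≤ 2 ^ (k + 1) + 1) (hoL : o + n ≤ L)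
    (hL : 2 ^ (k + 2) < L) : HasTwoExtensions i n o L := by
  have : 2 ^ (k + 2) = 2 * 2 ^ (k + 1) := pow_succ' 2 (k + 1)
  exact (hasTwoExtensions_two_pow k (o := min o (2 ^ (k + 2) + 1 - n)) hn (by omega)).widen
    (by omega) (by omega) (by omega)

lemma tmWord_eq_tmWord_zero_of_central (k : ℕ) {p : ℕ}
    (h : tmWord (p + (2 ^ (k + 1) - 1)) (2 ^ k + 2) = tmWord (2 ^ (k + 1) - 1) (2 ^ k + 2)) :
    tmWord p (2 ^ (k + 2)) = tmWord 0 (2 ^ (k + 2)) := by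
  induction k generalizing p with
  | zero =>
    have hp := mod_two_eq_of_tmWord_eq h (s := 0) (by norm_num) (by decide)
    have := tmWord_div_two_eq h hp (by norm_num)
    rw [show (p + (2 ^ 1 - 1)) % 2 = 1 by omega,
      show (p + (2 ^ 1 - 1)) / 2 = p / 2 by omega] at this
    simpa [show 2 * (p / 2) = p by omega] using tmWord_two_mul_eq this
  | succ k ih =>
    have h₀ : 0 < 2 ^ k := by positivity
    have h₁ : 2 ^ (k + 1) = 2 * 2 ^ k := pow_succ' 2 k
    have h₂ : 2 ^ (k + 2) = 4 * 2 ^ k := by ring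
    have h₃ : 2 ^ (k + 3) = 8 * 2 ^ k := by ring
    rw [show k + 1 + 1 = k + 2 from rfl, show k + 1 + 2 = k + 3 from rfl] at *
    have hpair : tm (2 ^ (k + 2) * 1 + 1) = tm (2 ^ (k + 2) * 1 + 2) := by
      rw [tm_two_pow_mul_add 1 (by omega), tm_two_pow_mul_add 1 (by omega)]
      decide
    have hp := mod_two_eq_of_tmWord_eq h (s := 2) (by omega)
      (by rwa [show 2 ^ (k + 2) - 1 + 2 = 2 ^ (k + 2) * 1 + 1 by omega])
    have := tmWord_div_two_eq h hp (by omega)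
    rw [show (p + (2 ^ (k + 2) - 1)) % 2 = 1 by omega,
      show (2 ^ (k + 1) + 2 + 1 + 1) / 2 = 2 ^ k + 2 by omega,
      show (p + (2 ^ (k + 2) - 1)) / 2 = p / 2 + (2 ^ (k + 1) - 1) by omega,
      show (2 ^ (k + 2) - 1) / 2 = 2 ^ (k + 1) - 1 by omega] at this
    rw [show 2 ^ (k + 3) = 2 * 2 ^ (k + 2) by omega, ← show 2 * (p / 2) = p by omega]
    exact tmWord_two_mul_eq (ih this)

lemma isFactor_append_append_iff {v₁ w v₂ : List (Fin 2)} :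
    IsFactor (v₁ ++ w ++ v₂) ↔ ∃ p, v₁ = tmWord p v₁.length ∧
      w = tmWord (p + v₁.length) w.length ∧ v₂ = tmWord (p + v₁.length + w.length) v₂.length := by
  simp only [IsFactor, List.length_append, tmWord_add_add]
  constructor
  · rintro ⟨p, hp⟩
    obtain ⟨h₁₂, h₃⟩ := List.append_inj hp (by simp [tmWord])
    obtain ⟨h₁, h₂⟩ := List.append_inj h₁₂ (by simp [tmWord])
    exact ⟨p, h₁, h₂, h₃⟩
  · rintro ⟨p, h₁, h₂, h₃⟩
    exact ⟨p, by rw [← h₁, ← h₂, ← h₃]⟩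

lemma exists_two_extensions {k n : ℕ} (hn : n ≤ 2 ^ (k + 1) + 1) {w : List (Fin 2)}
    (hw : w.length = n) (hwf : IsFactor w) {l₁ l₂ : ℕ} (hl : 2 ^ (k + 2) - n < l₁ + l₂) :
    ∃ vv yy : List (Fin 2) × List (Fin 2), vv ≠ yy ∧
      vv.1.length = l₁ ∧ vv.2.length = l₂ ∧ yy.1.length = l₁ ∧ yy.2.length = l₂ ∧
      IsFactor (vv.1 ++ w ++ vv.2) ∧ IsFactor (yy.1 ++ w ++ yy.2) := by
  obtain ⟨i, hi⟩ := hwf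
  rw [hw] at hi
  obtain ⟨p, q, hp, hq, hpq⟩ := hasTwoExtensions_of_two_pow_lt (i := i) (o := l₁)
    (L := l₁ + n + l₂) hn (by omega) (by omega)
  have hext : ∀ r, tmWord (r + l₁) n = w →
      tmWord r l₁ ++ w ++ tmWord (r + l₁ + n) l₂ = tmWord r (l₁ + n + l₂) := by
    intro r hr
    rw [tmWord_add_add, hr]
  refine ⟨(tmWord p l₁, tmWord (p + l₁ + n) l₂), (tmWord q l₁, tmWord (q + l₁ + n) l₂),
    fun h => hpq ?_, by simp, by simp, by simp, by simp, ?_, ?_⟩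
  · rw [← hext p (hp.trans hi.symm), ← hext q (hq.trans hi.symm)]
    simp only [Prod.mk.injEq] at h
    rw [h.1, h.2]
  · simpa only [hext p (hp.trans hi.symm)] using isFactor_tmWord p (l₁ + n + l₂)
  · simpa only [hext q (hq.trans hi.symm)] using isFactor_tmWord q (l₁ + n + l₂)

lemma existsUnique_extension {k n : ℕ} (h₁ : 2 ^ k + 2 ≤ n) (h₂ : n ≤ 2 ^ (k + 1) + 1) :
    ∃ w : List (Fin 2), w.length = n ∧ IsFactor w ∧
      ∃ l₁ l₂ : ℕ, l₁ + l₂ = 2 ^ (k + 2) - n ∧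
        ∃! vv : List (Fin 2) × List (Fin 2),
          vv.1.length = l₁ ∧ vv.2.length = l₂ ∧ IsFactor (vv.1 ++ w ++ vv.2) := by
  have : 2 ^ (k + 2) = 2 * 2 ^ (k + 1) := pow_succ' 2 (k + 1)
  set c := 2 ^ (k + 1) - 1
  set l₂ := 2 ^ (k + 2) - n - c
  refine ⟨tmWord c n, tmWord_length c n, isFactor_tmWord c n, c, l₂, by omega,
    (tmWord 0 c, tmWord (c + n) l₂), ⟨tmWord_length 0 c, tmWord_length _ _, ?_⟩, ?_⟩
  · exact isFactor_append_append_iff.2 ⟨0, by simp⟩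
  · rintro ⟨v₁, v₂⟩ ⟨hv₁ : v₁.length = c, hv₂ : v₂.length = l₂,
      hf : IsFactor (v₁ ++ tmWord c n ++ v₂)⟩
    obtain ⟨p, e₁, hw, e₂⟩ := isFactor_append_append_iff.1 hf
    rw [hv₁, tmWord_length] at hw
    rw [hv₁] at e₁
    rw [hv₁, tmWord_length, hv₂] at e₂
    have hcopy := tmWord_eq_tmWord_zero_of_central k
      (tmWord_eq_of_eq_of_le hw.symm (by omega))
    rw [e₁, e₂, Prod.mk.injEq]
    exact ⟨tmWord_eq_of_eq_of_le hcopy (by omega),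
      by simpa [add_assoc] using tmWord_add_eq_of_eq hcopy (a := c + n) (m := l₂) (by omega)⟩

theorem thueMorse_unique_extension_upper_bound (n : ℕ) (hn : 4 ≤ n) :
    (∀ w : List (Fin 2), w.length = n → IsFactor w →
      ∀ l₁ l₂ : ℕ, 2 ^ (Nat.log 2 (n - 2) + 2) - n < l₁ + l₂ →
        ∃ vv yy : List (Fin 2) × List (Fin 2), vv ≠ yy ∧
          vv.1.length = l₁ ∧ vv.2.length = l₂ ∧
          yy.1.length = l₁ ∧ yy.2.length = l₂ ∧
          IsFactor (vv.1 ++ w ++ vv.2) ∧ IsFactor (yy.1 ++ w ++ yy.2)) ∧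
    (∃ w : List (Fin 2), w.length = n ∧ IsFactor w ∧
      ∃ l₁ l₂ : ℕ, l₁ + l₂ = 2 ^ (Nat.log 2 (n - 2) + 2) - n ∧
        ∃! vv : List (Fin 2) × List (Fin 2),
          vv.1.length = l₁ ∧ vv.2.length = l₂ ∧ IsFactor (vv.1 ++ w ++ vv.2)) := by
  set k := Nat.log 2 (n - 2)
  have hlow : 2 ^ k ≤ n - 2 := Nat.pow_log_le_self 2 (by omega)
  have hup : n - 2 < 2 ^ (k + 1) := Nat.lt_pow_succ_log_self one_lt_two _
  exact ⟨fun w hw hwf l₁ l₂ hl => exists_two_extensions (by omega) hw hwf hl,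
    existsUnique_extension (by omega) (by omega)⟩
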